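/- A multiset Λ of 2n complex numbers is H-realizable (i.e., Λ is the complex eigenvalue multiset of some 2n×2n real Hamiltonian matrix) if and only if Λ is invariant under negation (−Λ = Λ as multisets) and invariant under complex conjugation (Λ̄ = Λ as multisets). -/

import Mathlib

open Matrix Polynomial

/-- The standard symplectic matrix `J_n = [[0, I_n], [-I_n, 0]]`. -/
def symplJ (n : ℕ) : Matrix (Fin n ⊕ Fin n) (Fin n ⊕ Fin n) ℝ :=
  Matrix.fromBlocks 0 1 (-1) 0

/-- A `2n × 2n` real matrix `A` is Hamiltonian if `Aᵀ J_n + J_n A = 0`. -/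
def IsHamiltonian {n : ℕ} (A : Matrix (Fin n ⊕ Fin n) (Fin n ⊕ Fin n) ℝ) : Prop :=
  Aᵀ * symplJ n + symplJ n * A = 0

/-- A multiset `Λ` of complex numbers is H-realizable (with parameter `n`) if it is the
multiset of complex roots of the characteristic polynomial of some `2n × 2n` real
Hamiltonian matrix. -/
def HRealizable (n : ℕ) (Λ : Multiset ℂ) : Prop :=
  ∃ A : Matrix (Fin n ⊕ Fin n) (Fin n ⊕ Fin n) ℝ,
    IsHamiltonian A ∧ ((A.map Complex.ofReal).charpoly).roots = Λ

/-! If `A` is Hamiltonian then `Aᵀ = J A J` with `J² = -1`, so `A` and `-A` have the same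
characteristic polynomial, whose complex roots are moreover closed under conjugation because it is
real. Conversely, an invariant `Λ` is the root multiset of `q(X²)` for a monic real `q` of degree
`n`. The companion matrix `M` of `q` is a product `F G` of symmetric matrices: the Gram matrix `H` of
the form `(x, y) ↦ ℓ(xy)` on `ℝ[X]/(q)`, with `ℓ` the top coordinate, is invertible and satisfies
`Mᵀ H = H M`, so take `F = H⁻¹`, `G = H M`. Then `[[0, F], [G, 0]]` is Hamiltonian with
characteristic polynomial `charpoly(F G)(X²) = q(X²)`. -/

namespace Polynomial

theorem coeff_comp_neg_X {R : Type*} [CommRing R] (p : R[X]) (k : ℕ) :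
    (p.comp (-X)).coeff k = (-1) ^ k * p.coeff k := by
  rw [← neg_one_mul (X : R[X]), ← C_1, ← C_neg, comp_C_mul_X_coeff, mul_comm]

theorem expand_contract_two_of_comp_neg_X {R : Type*} [CommRing R] [IsDomain R] [CharZero R]
    {p : R[X]} (h : p.comp (-X) = p) : expand R 2 (contract 2 p) = p := by
  ext k
  rw [coeff_expand two_pos, coeff_contract two_ne_zero]
  split_ifs with hk
  · rw [Nat.div_mul_cancel hk]
  · have hcoeff := congrArg (coeff · k) h
    simp only [coeff_comp_neg_X, (Nat.odd_iff.2 (by omega) : Odd k).neg_one_pow,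
      neg_one_mul] at hcoeff
    exact (neg_eq_self.1 hcoeff).symm

theorem multiset_prod_X_sub_C_comp_neg_X {R : Type*} [CommRing R] (s : Multiset R) :
    (s.map fun a => X - C a).prod.comp (-X)
      = (-1) ^ Multiset.card s * ((s.map fun z => -z).map fun a => X - C a).prod := by
  simp only [multiset_prod_comp, Multiset.map_map, Function.comp_def, sub_comp, X_comp, C_comp,
    map_neg, sub_neg_eq_add, ← neg_add']
  simpa only [Multiset.map_map, Multiset.card_map, Function.comp_def] using
    Multiset.prod_map_neg (s.map fun a => X + C a)

theorem roots_map_ofReal_map_conj (p : ℝ[X]) :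
    (p.map Complex.ofRealHom).roots.map (starRingEnd ℂ) = (p.map Complex.ofRealHom).roots := by
  rw [← (IsAlgClosed.splits _).roots_map, Polynomial.map_map]
  congr 2
  ext
  simp

end Polynomial

namespace Matrix

variable {n R : Type*} [Fintype n] [DecidableEq n] [CommRing R]

theorem charpoly_neg (M : Matrix n n R) :
    (-M).charpoly = (-1) ^ Fintype.card n * M.charpoly.comp (-X) := by
  have hmap : (charmatrix M).map (compRingHom (-X)) = -charmatrix (-M) := by
    ext i j : 1
    by_cases hij : i = j
    · subst hij
      simp only [coe_compRingHom, map_apply, charmatrix_apply_eq, sub_comp, X_comp, C_comp,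
        neg_apply, map_neg]
      ring
    · simp [hij]
  rw [charpoly, charpoly, ← coe_compRingHom_apply, RingHom.map_det, RingHom.mapMatrix_apply,
    hmap, det_neg, ← mul_assoc, ← pow_add, ← two_mul, pow_mul]
  simp

theorem roots_charpoly_neg [IsDomain R] (M : Matrix n n R) :
    (-M).charpoly.roots = M.charpoly.roots.map fun z => -z := by
  rw [charpoly_neg, ← C_1, ← C_neg, ← C_pow,
    roots_C_mul _ (pow_ne_zero _ (neg_ne_zero.2 one_ne_zero)), roots_comp_neg_X]

theorem expand_charpoly (p : ℕ) (M : Matrix n n R) :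
    expand R p M.charpoly = (scalar n (X ^ p) - M.map C).det := by
  rw [charpoly, ← AlgHom.coe_toRingHom, RingHom.map_det, RingHom.mapMatrix_apply]
  congr 1
  ext i j : 1
  by_cases hij : i = j
  · subst hij
    simp
  · simp [hij]

/-- Right multiplication by `[[X, 0], [C, 1]]` makes the characteristic matrix block triangular,
with the diagonal blocks `X² - BC` and `X`. -/
theorem charpoly_fromBlocks_zero₁₁_zero₂₂ (B C : Matrix n n R) :
    (fromBlocks 0 B C 0).charpoly = expand R 2 (B * C).charpoly := by
  have hcomm : C.map Polynomial.C * scalar n X = scalar n X * C.map Polynomial.C :=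
    (scalar_commute X (fun _ => Commute.all X _) _).symm
  have hfactor : charmatrix (fromBlocks 0 B C 0) * fromBlocks (scalar n X) 0 (C.map Polynomial.C) 1
      = fromBlocks (scalar n (X ^ 2) - (B * C).map Polynomial.C) (-B.map Polynomial.C) 0
          (scalar n X) := by
    simp [charmatrix_fromBlocks, fromBlocks_multiply, Matrix.map_mul, sq, sub_eq_add_neg,
      -scalar_apply, hcomm]
  have hdet := congrArg det hfactor
  rw [det_mul, det_fromBlocks_zero₁₂, det_fromBlocks_zero₂₁, det_one, mul_one,
    ← expand_charpoly, scalar_apply, det_diagonal, Finset.prod_const, Finset.card_univ] at hdet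
  exact (isRegular_X_pow _).right hdet

end Matrix

namespace Module.Basis

variable {ι R S : Type*} [CommRing R] [CommRing S] [Algebra R S]

noncomputable def mulFormMatrix (b : Basis ι R S) (ℓ : S →ₗ[R] R) : Matrix ι ι R :=
  of fun i j => ℓ (b i * b j)

theorem mulFormMatrix_isSymm (b : Basis ι R S) (ℓ : S →ₗ[R] R) :
    (b.mulFormMatrix ℓ).IsSymm := by
  ext i j
  simp [mulFormMatrix, mul_comm]

theorem sum_repr_mul_apply [Fintype ι] (b : Basis ι R S) (ℓ : S →ₗ[R] R) (y z : S) :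
    ∑ k, b.repr y k * ℓ (b k * z) = ℓ (y * z) := by
  conv_rhs => rw [← b.sum_repr y]
  simp only [Finset.sum_mul, map_sum, smul_mul_assoc, map_smul, smul_eq_mul]

theorem leftMulMatrix_transpose_mul_mulFormMatrix [Fintype ι] [DecidableEq ι]
    (b : Basis ι R S) (ℓ : S →ₗ[R] R) (x : S) :
    (Algebra.leftMulMatrix b x)ᵀ * b.mulFormMatrix ℓ
      = b.mulFormMatrix ℓ * Algebra.leftMulMatrix b x := by
  ext i j
  simp only [mulFormMatrix, mul_apply, transpose_apply, of_apply,
    Algebra.leftMulMatrix_eq_repr_mul]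
  simp_rw [mul_comm (ℓ (b i * _)), mul_comm (b i), b.sum_repr_mul_apply]
  rw [mul_right_comm]

end Module.Basis

namespace PowerBasis

variable {R S : Type*} [CommRing R] [CommRing S] [Algebra R S]

/-- The entries `ℓ (gen ^ (i + j))` vanish above the antidiagonal and equal `1` on it, so
reversing the rows gives a unitriangular matrix. -/
theorem isUnit_det_mulFormMatrix_coord_last (pb : PowerBasis R S) (hpos : 0 < pb.dim) :
    IsUnit (pb.basis.mulFormMatrix (pb.basis.coord ⟨pb.dim - 1, by omega⟩)).det := by
  set H := pb.basis.mulFormMatrix (pb.basis.coord ⟨pb.dim - 1, by omega⟩)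
  have hentry : ∀ i j : Fin pb.dim, i.val + j.val < pb.dim →
      H i j = if i.val + j.val = pb.dim - 1 then 1 else 0 := by
    intro i j hij
    simp only [H, Module.Basis.mulFormMatrix, of_apply, pb.basis_eq_pow, ← pow_add]
    rw [← pb.basis_eq_pow ⟨_, hij⟩, Module.Basis.coord_apply, Module.Basis.repr_self,
      Finsupp.single_apply]
    simp [Fin.ext_iff]
  have htri : (H.submatrix Fin.revPerm id).IsUpperTriangular := by
    intro i j hji
    have : (j : ℕ) < i := hji
    simp only [submatrix_apply, id]
    rw [hentry _ _ (by simp [Fin.val_rev]; omega), if_neg (by simp [Fin.val_rev]; omega)]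
  have hdet : (Equiv.Perm.sign (Fin.revPerm (n := pb.dim)) : R) * H.det = 1 := by
    rw [← det_permute, det_of_isUpperTriangular htri]
    refine Finset.prod_eq_one fun i _ => ?_
    simp only [submatrix_apply, id]
    rw [hentry _ _ (by simp [Fin.val_rev]; omega), if_pos (by simp [Fin.val_rev]; omega)]
  exact IsUnit.of_mul_eq_one_right _ hdet

/-- If `H` is an invertible symmetric matrix with `Mᵀ H = H M`, then `M = H⁻¹ (H M)` with
both factors symmetric. -/
theorem exists_isSymm_mul_eq_leftMulMatrix_gen (pb : PowerBasis R S) :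
    ∃ F G : Matrix (Fin pb.dim) (Fin pb.dim) R, F.IsSymm ∧ G.IsSymm ∧
      F * G = Algebra.leftMulMatrix pb.basis pb.gen := by
  rcases Nat.eq_zero_or_pos pb.dim with h0 | hpos
  · refine ⟨1, 1, isSymm_one, isSymm_one, ?_⟩
    ext i
    exact (Fin.cast h0 i).elim0
  set H := pb.basis.mulFormMatrix (pb.basis.coord ⟨pb.dim - 1, by omega⟩)
  have hH : H.IsSymm := pb.basis.mulFormMatrix_isSymm _
  refine ⟨H⁻¹, H * Algebra.leftMulMatrix pb.basis pb.gen, ?_, ?_, ?_⟩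
  · rw [IsSymm, transpose_nonsing_inv, hH.eq]
  · rw [IsSymm, transpose_mul, hH.eq, Module.Basis.leftMulMatrix_transpose_mul_mulFormMatrix]
  · rw [← mul_assoc, nonsing_inv_mul _ (pb.isUnit_det_mulFormMatrix_coord_last hpos), one_mul]

end PowerBasis

theorem Polynomial.Monic.exists_isSymm_mul_charpoly_eq {K : Type*} [Field K] {q : K[X]}
    (hq : q.Monic) :
    ∃ F G : Matrix (Fin q.natDegree) (Fin q.natDegree) K, F.IsSymm ∧ G.IsSymm ∧
      (F * G).charpoly = q := by
  obtain ⟨F, G, hF, hG, hFG⟩ :=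
    (AdjoinRoot.powerBasis hq.ne_zero).exists_isSymm_mul_eq_leftMulMatrix_gen
  have hchar := congrArg charpoly hFG
  rw [charpoly_leftMulMatrix, AdjoinRoot.minpoly_powerBasis_gen_of_monic hq] at hchar
  exact ⟨F, G, hF, hG, hchar⟩

theorem Matrix.charpoly_map_ofReal {m : Type*} [Fintype m] [DecidableEq m] (A : Matrix m m ℝ) :
    (A.map Complex.ofReal).charpoly = A.charpoly.map Complex.ofRealHom :=
  A.charpoly_map Complex.ofRealHom

theorem symplJ_mul_self (n : ℕ) : symplJ n * symplJ n = -1 := by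
  simp [symplJ, fromBlocks_multiply, ← fromBlocks_one, fromBlocks_neg]

theorem isHamiltonian_fromBlocks_zero {n : ℕ} {F G : Matrix (Fin n) (Fin n) ℝ} (hF : F.IsSymm)
    (hG : G.IsSymm) : IsHamiltonian (fromBlocks 0 F G 0) := by
  simp [IsHamiltonian, symplJ, fromBlocks_transpose, hF.eq, hG.eq, fromBlocks_multiply,
    fromBlocks_add]

namespace IsHamiltonian

variable {n : ℕ} {A : Matrix (Fin n ⊕ Fin n) (Fin n ⊕ Fin n) ℝ}

theorem transpose_eq (hA : IsHamiltonian A) : Aᵀ = symplJ n * A * symplJ n := by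
  simpa [add_mul, mul_assoc, symplJ_mul_self, add_eq_zero_iff_eq_neg] using
    congrArg (· * symplJ n) hA

theorem charpoly_neg (hA : IsHamiltonian A) : (-A).charpoly = A.charpoly := by
  rw [← charpoly_transpose A, hA.transpose_eq, mul_assoc, charpoly_mul_comm, mul_assoc,
    symplJ_mul_self, mul_neg_one]

end IsHamiltonian

/-- A conjugation-invariant `Λ` is the root multiset of a real polynomial, and negation
invariance together with `|Λ| = 2n` makes that polynomial even, i.e. a polynomial in `X²`. -/
theorem exists_monic_expand_two_roots_eq {n : ℕ} {Λ : Multiset ℂ}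
    (hcard : Multiset.card Λ = 2 * n) (hneg : Λ.map (fun z => -z) = Λ)
    (hconj : Λ.map (fun z => starRingEnd ℂ z) = Λ) :
    ∃ q : ℝ[X], q.Monic ∧ q.natDegree = n ∧
      ((expand ℝ 2 q).map Complex.ofRealHom).roots = Λ := by
  set P := (Λ.map fun a => X - C a).prod
  have hPeven : P.comp (-X) = P := by
    rw [multiset_prod_X_sub_C_comp_neg_X, hcard, pow_mul, neg_one_sq, one_pow, one_mul, hneg]
  have hPconj : P.map (starRingEnd ℂ) = P := by
    conv_rhs => simp only [P]; rw [← hconj]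
    simp [P, Polynomial.map_multiset_prod, Multiset.map_map]
  set Q := contract 2 P
  have hPQ : expand ℂ 2 Q = P := expand_contract_two_of_comp_neg_X hPeven
  have hQmonic : Q.Monic := by
    rw [← monic_expand_iff two_pos, hPQ]
    exact monic_multiset_prod_of_monic _ _ fun a _ => monic_X_sub_C a
  have hQdeg : Q.natDegree = n := by
    have := congrArg natDegree hPQ
    rw [natDegree_expand, natDegree_multiset_prod_X_sub_C_eq_card, hcard] at this
    omega
  have hQlifts : Q ∈ lifts Complex.ofRealHom := by
    refine (lifts_iff_coeff_lifts Q).2 fun k => ?_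
    have hreal : starRingEnd ℂ (P.coeff (k * 2)) = P.coeff (k * 2) := by
      rw [← coeff_map, hPconj]
    obtain ⟨r, hr⟩ := Complex.conj_eq_iff_real.1 hreal
    exact ⟨r, by rw [coeff_contract two_ne_zero, hr]; rfl⟩
  obtain ⟨q, hqQ, hqdeg, hq⟩ := lifts_and_natDegree_eq_and_monic hQlifts hQmonic
  refine ⟨q, hq, hqdeg.trans hQdeg, ?_⟩
  rw [map_expand, hqQ, hPQ, roots_multiset_prod_X_sub_C]

/-- A multiset `Λ` of `2n` complex numbers is H-realizable if and only if it is
invariant under negation and under complex conjugation. -/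
theorem hRealizable_iff_neg_conj_invariant {n : ℕ} (Λ : Multiset ℂ)
    (hcard : Multiset.card Λ = 2 * n) :
    HRealizable n Λ ↔
      (Λ.map (fun z => -z) = Λ ∧ Λ.map (fun z => starRingEnd ℂ z) = Λ) := by
  constructor
  · rintro ⟨A, hA, rfl⟩
    refine ⟨?_, by rw [charpoly_map_ofReal]; exact A.charpoly.roots_map_ofReal_map_conj⟩
    rw [← roots_charpoly_neg, ← Matrix.map_neg _ Complex.ofReal_neg, charpoly_map_ofReal,
      charpoly_map_ofReal, hA.charpoly_neg]
  · rintro ⟨hneg, hconj⟩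
    obtain ⟨q, hq, rfl, hroots⟩ := exists_monic_expand_two_roots_eq hcard hneg hconj
    obtain ⟨F, G, hF, hG, hFG⟩ := hq.exists_isSymm_mul_charpoly_eq
    refine ⟨fromBlocks 0 F G 0, isHamiltonian_fromBlocks_zero hF hG, ?_⟩
    rw [charpoly_map_ofReal, charpoly_fromBlocks_zero₁₁_zero₂₂, hFG, hroots]
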